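/- Let A ∈ ℝ^{m×r} with rank r, γ ∈ range(A), v = A†γ with v_j ≠ 0, and Ā be A with column j replaced by γ. Then ‖Ā†‖_{2,1} = |v̄_j|·‖A†_{j·}‖₂ + Σ_{i≠j} ( ‖A†_{i·}‖₂² + 2v̄_i·A†_{i·}(A†_{j·})ᵀ + v̄_i²·‖A†_{j·}‖₂² )^{1/2}, where v̄ := (1/v_j)(−v₁,…,−v_{j−1}, 1, −v_{j+1},…,−v_r)ᵀ. -/

import Mathlib

/-!
Since `A v = γ`, replacing column `j` of `A` by `γ` is right multiplication by the eta matrix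
`E = 1.updateCol j v`, whose inverse is the eta matrix `1.updateCol j v̄`. For full column rank
`A† = (AᵀA)⁻¹Aᵀ`, and `(AE)† = E⁻¹A†` for invertible `E`. So row `j` of `Ā†` is `v̄_j A†_{j·}` and
row `i ≠ j` is `A†_{i·} + v̄_i A†_{j·}`; expanding the squared row norms gives the formula.
-/

open Matrix Finset

namespace Matrix

variable {l m n α K : Type*} [Fintype n] [DecidableEq n]

section Eta

variable [Semiring α]

theorem updateCol_mulVec_self (A : Matrix m n α) (j : n) (v : n → α) :
    A.updateCol j (A *ᵥ v) = A * (1 : Matrix n n α).updateCol j v := by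
  rw [mul_updateCol, Matrix.mul_one]

theorem one_updateCol_mulVec_apply (j : n) (w x : n → α) (i : n) :
    ((1 : Matrix n n α).updateCol j w *ᵥ x) i = (if i = j then 0 else x i) + w i * x j := by
  rw [mulVec, dotProduct, ← add_sum_erase _ _ (mem_univ j), updateCol_self, add_comm]
  congr 1
  rw [sum_congr rfl fun l hl => by rw [updateCol_ne (ne_of_mem_erase hl)]]
  simp [one_apply, ite_not]

theorem one_updateCol_mul_apply (j : n) (w : n → α) (P : Matrix n l α) (i : n) (k : l) :
    ((1 : Matrix n n α).updateCol j w * P) i k = (if i = j then 0 else P i k) + w i * P j k :=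
  one_updateCol_mulVec_apply j w (fun l => P l k) i

end Eta

theorem one_updateCol_mul_one_updateCol_eq_one [Field K] {j : n} {v w : n → K}
    (hv : v j ≠ 0) (hw : ∀ i, w i = if i = j then 1 / v j else -v i / v j) :
    (1 : Matrix n n K).updateCol j w * (1 : Matrix n n K).updateCol j v = 1 := by
  rw [mul_updateCol, Matrix.mul_one, updateCol_idem]
  ext i k
  rcases eq_or_ne k j with rfl | hk
  · rw [updateCol_self, one_updateCol_mulVec_apply, hw]
    rcases eq_or_ne i k with rfl | hi
    · simp [hv]
    · simp [hi, one_apply_ne hi]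
      field_simp
      ring
  · rw [updateCol_ne hk]

theorem isUnit_of_rank_eq_card [Field K] {M : Matrix n n K} (h : M.rank = Fintype.card n) :
    IsUnit M := by
  rw [← mulVec_surjective_iff_isUnit]
  refine (LinearMap.range_eq_top (f := M.mulVecLin)).mp (Submodule.eq_top_of_finrank_eq ?_)
  rw [Module.finrank_fintype_fun_eq_card]
  exact h

theorem isUnit_transpose_mul_self_of_rank_eq_card [Fintype m] [Field K] [LinearOrder K]
    [IsStrictOrderedRing K] {A : Matrix m n K} (h : A.rank = Fintype.card n) :
    IsUnit (Aᵀ * A) :=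
  isUnit_of_rank_eq_card (by rw [rank_transpose_mul_self, h])

section LeftPinv

variable [Fintype m] [CommRing K]

/-- The Moore–Penrose pseudoinverse `A†` when `A` has full column rank. -/
noncomputable def leftPinv (A : Matrix m n K) : Matrix n m K :=
  (Aᵀ * A)⁻¹ * Aᵀ

theorem leftPinv_mul_self {A : Matrix m n K} (h : IsUnit (Aᵀ * A)) : A.leftPinv * A = 1 := by
  rw [leftPinv, Matrix.mul_assoc, nonsing_inv_mul _ ((isUnit_iff_isUnit_det _).mp h)]

theorem leftPinv_mul_of_isUnit_det (A : Matrix m n K) {E : Matrix n n K} (hE : IsUnit E.det) :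
    (A * E).leftPinv = E⁻¹ * A.leftPinv := by
  have hEt : (Eᵀ)⁻¹ * Eᵀ = 1 := nonsing_inv_mul _ (by rwa [det_transpose])
  rw [leftPinv, leftPinv, transpose_mul,
    show Eᵀ * Aᵀ * (A * E) = Eᵀ * (Aᵀ * A) * E by simp only [Matrix.mul_assoc],
    mul_inv_rev, mul_inv_rev]
  simp only [Matrix.mul_assoc]
  rw [← Matrix.mul_assoc (Eᵀ)⁻¹, hEt, Matrix.one_mul]

end LeftPinv

end Matrix

theorem Real.sqrt_sum_mul_sq {ι : Type*} (s : Finset ι) (c : ℝ) (x : ι → ℝ) :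
    √(∑ k ∈ s, (c * x k) ^ 2) = |c| * √(∑ k ∈ s, x k ^ 2) := by
  simp_rw [mul_pow, ← mul_sum, Real.sqrt_mul (sq_nonneg c), Real.sqrt_sq_eq_abs]

theorem Finset.sum_add_mul_sq {ι R : Type*} [CommSemiring R] (s : Finset ι) (c : R)
    (x y : ι → R) :
    ∑ k ∈ s, (x k + c * y k) ^ 2 =
      ∑ k ∈ s, x k ^ 2 + 2 * c * ∑ k ∈ s, x k * y k + c ^ 2 * ∑ k ∈ s, y k ^ 2 := by
  simp only [mul_sum, ← sum_add_distrib]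
  exact sum_congr rfl fun k _ => by ring

/-- 2,1-norm of the pseudoinverse after a column replacement: with `v = A†γ`, `v_j ≠ 0`,
`v̄_i = -v_i/v_j` for `i ≠ j`, `v̄_j = 1/v_j`, and `Ā` equal to `A` with column `j`
replaced by `γ`, we have
`‖Ā†‖_{2,1} = |v̄_j|‖A†_{j·}‖₂ + ∑_{i≠j} (‖A†_{i·}‖₂² + 2v̄_i⟨A†_{i·},A†_{j·}⟩ + v̄_i²‖A†_{j·}‖₂²)^{1/2}`. -/
theorem norm21_pinv_column_replacement (m r : ℕ) (A : Matrix (Fin m) (Fin r) ℝ)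
    (hr : A.rank = r) (γ : Fin m → ℝ) (hγ : ∃ x, A.mulVec x = γ)
    (j : Fin r) (v : Fin r → ℝ) (hv : v = ((Aᵀ * A)⁻¹ * Aᵀ).mulVec γ)
    (hvj : v j ≠ 0)
    (vbar : Fin r → ℝ) (hvbar : ∀ i, vbar i = if i = j then 1 / v j else -(v i) / v j) :
    (∑ i, Real.sqrt (∑ k,
        ((((A.updateCol j γ)ᵀ * A.updateCol j γ)⁻¹ * (A.updateCol j γ)ᵀ) i k) ^ 2)) =
      |vbar j| * Real.sqrt (∑ k, (((Aᵀ * A)⁻¹ * Aᵀ) j k) ^ 2) +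
      ∑ i ∈ univ.erase j, Real.sqrt
        ((∑ k, (((Aᵀ * A)⁻¹ * Aᵀ) i k) ^ 2) +
          2 * vbar i * (∑ k, ((Aᵀ * A)⁻¹ * Aᵀ) i k * ((Aᵀ * A)⁻¹ * Aᵀ) j k) +
          vbar i ^ 2 * (∑ k, (((Aᵀ * A)⁻¹ * Aᵀ) j k) ^ 2)) := by
  simp only [← leftPinv.eq_def] at hv ⊢
  have hAv : A *ᵥ v = γ := by
    obtain ⟨x, rfl⟩ := hγ
    have hPA := leftPinv_mul_self
      (isUnit_transpose_mul_self_of_rank_eq_card (by rw [hr, Fintype.card_fin]))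
    rw [show v = x by rw [hv, mulVec_mulVec, hPA, one_mulVec]]
  have hFE := one_updateCol_mul_one_updateCol_eq_one hvj hvbar
  rw [← hAv, updateCol_mulVec_self, leftPinv_mul_of_isUnit_det _ (isUnit_det_of_left_inverse hFE),
    inv_eq_left_inv hFE, ← add_sum_erase _ _ (mem_univ j)]
  congr 1
  · simp only [one_updateCol_mul_apply, ↓reduceIte, zero_add, Real.sqrt_sum_mul_sq]
  · refine sum_congr rfl fun i hi => ?_
    simp only [one_updateCol_mul_apply, if_neg (ne_of_mem_erase hi), sum_add_mul_sq]
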